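/- Let s and t be probability density functions on ℝ^q with respect to the Lebesgue measure, and let τ > 0 be such that s(y) ≤ e^τ t(y) for almost every y. Then for every integer k ≥ 3, ∫_{ℝ^q} (max(log(s(y)/t(y)), 0))^k s(y) dy ≤ τ^{k−2} · (τ² / (e^{−τ} + τ − 1)) · ∫_{ℝ^q} log(s(y)/t(y)) s(y) dy. -/

import Mathlib

open MeasureTheory Real

/-!
Write `x = log (s / t)`, so that `x ≤ τ` on `{s > 0}`. Since `e^{-x} s = t` there, the integral
of `(e^{-x} + x - 1) s` is at most `∫ t - ∫ s + ∫ x s = KL(s, t)`. It therefore suffices to bound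
`(x⁺)^k ≤ τ^{k-2} τ² / (e^{-τ} + τ - 1) · (e^{-x} + x - 1)` for `x ≤ τ`, which follows from
`x^{k-2} ≤ τ^{k-2}` and from `(e^{-x} + x - 1) / x²` being decreasing on `(0, ∞)`.
-/

lemma two_sub_sub_mul_exp_neg_nonpos {x : ℝ} (hx : 0 ≤ x) : 2 - x - (x + 2) * exp (-x) ≤ 0 := by
  let φ : ℝ → ℝ := fun x => 2 - x - (x + 2) * exp (-x)
  have hφ : ∀ y, HasDerivAt φ (-1 + (y + 1) * exp (-y)) y := by
    intro y
    exact ((hasDerivAt_id' (x := y)).const_sub 2 |>.sub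
      ((hasDerivAt_id' (x := y)).add_const 2 |>.mul (hasDerivAt_neg y).exp)).congr_deriv
      (by ring)
  have hanti : AntitoneOn φ (Set.Ici 0) := by
    refine antitoneOn_of_deriv_nonpos (convex_Ici 0) (by fun_prop)
      (fun y _ => (hφ y).differentiableAt.differentiableWithinAt) fun y _ => ?_
    have : (y + 1) * exp (-y) ≤ 1 := by
      rw [exp_neg, ← div_eq_mul_inv, div_le_one (exp_pos y)]
      exact add_one_le_exp y
    rw [(hφ y).deriv]
    linarith
  simpa [φ] using hanti Set.self_mem_Ici hx hx

lemma antitoneOn_exp_neg_add_sub_one_div_sq :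
    AntitoneOn (fun x => (exp (-x) + x - 1) / x ^ 2) (Set.Ioi 0) := by
  have hderiv : ∀ y : ℝ, y ≠ 0 → HasDerivAt (fun x => (exp (-x) + x - 1) / x ^ 2)
      (y * (2 - y - (y + 2) * exp (-y)) / (y ^ 2) ^ 2) y := by
    intro y hy
    exact ((((hasDerivAt_neg y).exp.add (hasDerivAt_id' (x := y))).sub_const 1).div
      (hasDerivAt_pow 2 y) (pow_ne_zero 2 hy)).congr_deriv
      (by simp only [Pi.add_apply]; field_simp; ring)
  refine antitoneOn_of_deriv_nonpos (convex_Ioi 0) ?_ ?_ ?_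
  · exact ContinuousOn.div (by fun_prop) (by fun_prop) fun x hx => pow_ne_zero 2 (ne_of_gt hx)
  · intro y hy
    rw [interior_Ioi] at hy
    exact (hderiv y (ne_of_gt hy)).differentiableAt.differentiableWithinAt
  · intro y hy
    rw [interior_Ioi] at hy
    rw [(hderiv y (ne_of_gt hy)).deriv]
    exact div_nonpos_of_nonpos_of_nonneg
      (mul_nonpos_of_nonneg_of_nonpos hy.le (two_sub_sub_mul_exp_neg_nonpos hy.le)) (by positivity)

lemma exp_neg_add_sub_one_pos {x : ℝ} (hx : x ≠ 0) : 0 < exp (-x) + x - 1 := by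
  linarith [add_one_lt_exp (neg_ne_zero.2 hx)]

lemma pow_max_zero_le_mul_exp_neg_add_sub_one {τ x : ℝ} (hτ : 0 < τ) (hx : x ≤ τ) {k : ℕ}
    (hk : 2 ≤ k) :
    max x 0 ^ k ≤ τ ^ (k - 2) * (τ ^ 2 / (exp (-τ) + τ - 1)) * (exp (-x) + x - 1) := by
  have hA := exp_neg_add_sub_one_pos hτ.ne'
  rcases le_or_gt x 0 with hx0 | hx0
  · rw [max_eq_right hx0, zero_pow (by omega)]
    have : 0 ≤ exp (-x) + x - 1 := by linarith [add_one_le_exp (-x)]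
    positivity
  rw [max_eq_left hx0.le]
  have hsq : x ^ 2 ≤ τ ^ 2 / (exp (-τ) + τ - 1) * (exp (-x) + x - 1) := by
    have := antitoneOn_exp_neg_add_sub_one_div_sq hx0 (lt_of_lt_of_le hx0 hx) hx
    rw [div_le_div_iff₀ (by positivity) (by positivity)] at this
    rw [div_mul_eq_mul_div, le_div_iff₀ hA]
    linarith
  calc x ^ k = x ^ (k - 2) * x ^ 2 := by rw [← pow_add, Nat.sub_add_cancel hk]
    _ ≤ τ ^ (k - 2) * (τ ^ 2 / (exp (-τ) + τ - 1) * (exp (-x) + x - 1)) :=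
        mul_le_mul (pow_le_pow_left₀ hx0.le hx _) hsq (by positivity) (by positivity)
    _ = _ := by ring

lemma exp_neg_log_div_mul_le {a b : ℝ} (ha : 0 ≤ a) (hb : 0 ≤ b) (hab : 0 < a → 0 < b) :
    exp (-log (a / b)) * a ≤ b := by
  rcases ha.eq_or_lt with rfl | ha
  · simpa using hb
  rw [exp_neg, exp_log (div_pos ha (hab ha)), inv_div, div_mul_cancel₀ _ ha.ne']

section KullbackLeibler

variable {α : Type*} [MeasurableSpace α] {μ : Measure α} {s t : α → ℝ}

lemma integrable_exp_neg_log_div_mul (hs : Integrable s μ) (ht : Integrable t μ)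
    (hs0 : 0 ≤ᵐ[μ] s) (ht0 : 0 ≤ᵐ[μ] t) (hst : ∀ᵐ y ∂μ, 0 < s y → 0 < t y) :
    Integrable (fun y => exp (-log (s y / t y)) * s y) μ := by
  refine ht.mono'
    ((hs.aemeasurable.div ht.aemeasurable).log.neg.exp.mul hs.aemeasurable).aestronglyMeasurable ?_
  filter_upwards [hs0, ht0, hst] with y hsy hty hsty
  rw [norm_of_nonneg (mul_nonneg (exp_pos _).le hsy)]
  exact exp_neg_log_div_mul_le hsy hty hsty

lemma integral_exp_neg_log_div_add_log_div_sub_one_mul_le (hs : Integrable s μ)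
    (ht : Integrable t μ) (hs0 : 0 ≤ᵐ[μ] s) (ht0 : 0 ≤ᵐ[μ] t)
    (hst : ∀ᵐ y ∂μ, 0 < s y → 0 < t y) (hkl : Integrable (fun y => log (s y / t y) * s y) μ) :
    Integrable (fun y => (exp (-log (s y / t y)) + log (s y / t y) - 1) * s y) μ ∧
      ∫ y, (exp (-log (s y / t y)) + log (s y / t y) - 1) * s y ∂μ ≤
        ∫ y, log (s y / t y) * s y ∂μ + ∫ y, t y ∂μ - ∫ y, s y ∂μ := by
  have he := integrable_exp_neg_log_div_mul hs ht hs0 ht0 hst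
  have hsplit : (fun y => (exp (-log (s y / t y)) + log (s y / t y) - 1) * s y) =
      fun y => exp (-log (s y / t y)) * s y + log (s y / t y) * s y - s y := by
    ext y; ring
  rw [hsplit, integral_sub (f := fun y => exp (-log (s y / t y)) * s y + log (s y / t y) * s y)
    (he.add hkl) hs, integral_add he hkl]
  refine ⟨(he.add hkl).sub hs, ?_⟩
  have : ∫ y, exp (-log (s y / t y)) * s y ∂μ ≤ ∫ y, t y ∂μ := by
    refine integral_mono_ae he ht ?_
    filter_upwards [hs0, ht0, hst] with y hsy hty hsty
    exact exp_neg_log_div_mul_le hsy hty hsty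
  linarith

end KullbackLeibler

theorem stmt_3_general (q : ℕ) (τ : ℝ) (hτ : 0 < τ)
    (s t : (Fin q → ℝ) → ℝ)
    (hs_nonneg : ∀ y, 0 ≤ s y) (ht_nonneg : ∀ y, 0 ≤ t y)
    (hs_one : ∫ y, s y = 1) (ht_one : ∫ y, t y = 1)
    (hbound : ∀ᵐ y : Fin q → ℝ, s y ≤ Real.exp τ * t y)
    (k : ℕ) (hk : 3 ≤ k)
    (hint_kl : Integrable (fun y => Real.log (s y / t y) * s y)) :
    ∫ y, (max (Real.log (s y / t y)) 0) ^ k * s y ≤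
      τ ^ (k - 2) * (τ ^ 2 / (Real.exp (-τ) + τ - 1)) *
        ∫ y, Real.log (s y / t y) * s y := by
  have hs := Integrable.of_integral_ne_zero (hs_one ▸ one_ne_zero)
  have ht := Integrable.of_integral_ne_zero (ht_one ▸ one_ne_zero)
  have hst : ∀ᵐ y, 0 < s y → 0 < t y := by
    filter_upwards [hbound] with y hy hsy
    exact pos_of_mul_pos_right (hsy.trans_le hy) (exp_pos τ).le
  have hlog : ∀ᵐ y, 0 < s y → log (s y / t y) ≤ τ := by
    filter_upwards [hbound, hst] with y hy hsty hsy
    rw [log_le_iff_le_exp (div_pos hsy (hsty hsy)), div_le_iff₀ (hsty hsy)]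
    exact hy
  obtain ⟨hF, hF_le⟩ := integral_exp_neg_log_div_add_log_div_sub_one_mul_le hs ht
    (ae_of_all _ hs_nonneg) (ae_of_all _ ht_nonneg) hst hint_kl
  rw [hs_one, ht_one, add_sub_cancel_right] at hF_le
  refine (integral_mono_of_nonneg (ae_of_all _ fun y =>
    mul_nonneg (pow_nonneg (le_max_right _ _) _) (hs_nonneg y)) (hF.const_mul _) ?_).trans
    ((integral_const_mul _ _).trans_le (mul_le_mul_of_nonneg_left hF_le ?_))
  · filter_upwards [hlog] with y hy
    rcases (hs_nonneg y).eq_or_lt with h0 | hpos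
    · simp [← h0]
    rw [← mul_assoc]
    exact mul_le_mul_of_nonneg_right
      (pow_max_zero_le_mul_exp_neg_add_sub_one hτ (hy hpos) (by omega)) hpos.le
  · have := exp_neg_add_sub_one_pos hτ.ne'
    positivity

/-- Moment bound: if `s, t` are probability densities on `ℝ^q` with `s ≤ e^τ t` a.e.,
then for every integer `k ≥ 3`,
`∫ (max(log(s/t),0))^k s ≤ τ^{k-2} (τ²/(e^{-τ}+τ-1)) ∫ log(s/t) s`. -/
theorem stmt_3 (q : ℕ) (τ : ℝ) (hτ : 0 < τ)
    (s t : (Fin q → ℝ) → ℝ)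
    (hs_meas : Measurable s) (ht_meas : Measurable t)
    (hs_nonneg : ∀ y, 0 ≤ s y) (ht_nonneg : ∀ y, 0 ≤ t y)
    (hs_one : ∫ y, s y = 1) (ht_one : ∫ y, t y = 1)
    (hbound : ∀ᵐ y : Fin q → ℝ, s y ≤ Real.exp τ * t y)
    (k : ℕ) (hk : 3 ≤ k)
    (hint_k : Integrable (fun y => (max (Real.log (s y / t y)) 0) ^ k * s y))
    (hint_kl : Integrable (fun y => Real.log (s y / t y) * s y)) :
    ∫ y, (max (Real.log (s y / t y)) 0) ^ k * s y ≤
      τ ^ (k - 2) * (τ ^ 2 / (Real.exp (-τ) + τ - 1)) *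
        ∫ y, Real.log (s y / t y) * s y :=
  stmt_3_general q τ hτ s t hs_nonneg ht_nonneg hs_one ht_one hbound k hk hint_kl
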